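/- Fix a finite group L, an integer t ≥ 2 and θ ∈ Aut(L). Assume ℓ ∈ L^θ is θ-quasi-real of type j. If t ≥ 3, or if t = 2 and ord(ℓ) does not divide 2(j − 1), then the twisted homogeneous rack C_ℓ is of type D. -/

import Mathlib

/-- A nonempty subset of `X` closed under the operation `op` (a subrack). -/
def IsSubrackOf {X : Type*} (op : X → X → X) (Y : Set X) : Prop :=
  Y.Nonempty ∧ ∀ a ∈ Y, ∀ b ∈ Y, op a b ∈ Y

/-- The rack with underlying set `C ⊆ X` and operation `op` is of type D:
there is a decomposable subrack `R ⊔ S` of `C` and `r ∈ R`, `s ∈ S` with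
`r ▹ (s ▹ (r ▹ s)) ≠ s`. -/
def IsTypeDOn {X : Type*} (op : X → X → X) (C : Set X) : Prop :=
  ∃ R S : Set X, R ⊆ C ∧ S ⊆ C ∧ IsSubrackOf op R ∧ IsSubrackOf op S ∧
    Disjoint R S ∧
    (∀ r ∈ R, ∀ s ∈ S, op r s ∈ S) ∧ (∀ s ∈ S, ∀ r ∈ R, op s r ∈ R) ∧
    ∃ r ∈ R, ∃ s ∈ S, op r (op s (op r s)) ≠ s

/-- The automorphism `u` of `L^t`: `u(ℓ₁, …, ℓ_t) = (θ(ℓ_t), ℓ₁, …, ℓ_{t-1})`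
(indices `0, …, t-1`, so coordinate `0` is `ℓ₁` and coordinate `t-1` is `ℓ_t`). -/
def thrU {L : Type*} [Group L] (θ : L ≃* L) (t : ℕ) (x : Fin t → L) : Fin t → L :=
  fun i => if (i : ℕ) = 0 then θ (x ⟨t - 1, by have := i.2; omega⟩)
    else x ⟨(i : ℕ) - 1, by have := i.2; omega⟩

/-- The rack operation `y ▹ z = y · u(z · y⁻¹)` on `L^t`. -/
def thrOp {L : Type*} [Group L] (θ : L ≃* L) (t : ℕ) (y z : Fin t → L) : Fin t → L :=
  y * thrU θ t (z * y⁻¹)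

/-- The element `(e, …, e, ℓ)` of `L^t`. -/
def thrBase {L : Type*} [Group L] (t : ℕ) (ℓ : L) : Fin t → L :=
  fun i => if (i : ℕ) = t - 1 then ℓ else 1

/-- The twisted conjugacy class (twisted homogeneous rack) of `x ∈ L^t`
with respect to `u`, i.e. the orbit of `x` under `g ⇀ x = g · x · u(g)⁻¹`. -/
def thrClassOf {L : Type*} [Group L] (θ : L ≃* L) (t : ℕ) (x : Fin t → L) :
    Set (Fin t → L) :=
  {y | ∃ g : Fin t → L, g * x * (thrU θ t g)⁻¹ = y}

/-- The twisted homogeneous rack `C_ℓ = C_{(e,…,e,ℓ)}` of class `(L, t, θ)`. -/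
def thrClass {L : Type*} [Group L] (θ : L ≃* L) (t : ℕ) (ℓ : L) : Set (Fin t → L) :=
  thrClassOf θ t (thrBase t ℓ)

/-- The twisted conjugacy class `O^{L,θ}_ℓ = {a·ℓ·θ(a)⁻¹ : a ∈ L}`. -/
def twConjClass {L : Type*} [Group L] (θ : L ≃* L) (ℓ : L) : Set L :=
  {k | ∃ a : L, a * ℓ * (θ a)⁻¹ = k}

/-!
Inside `L^t`, the vectors all of whose entries are powers of the `θ`-fixed element `ℓ` form a
subrack on which `u` is the cyclic shift of coordinates, so `y ▹ z` has the same exponent sum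
as `z` (modulo `ord ℓ`). Intersecting `C_ℓ` with the vectors of exponent sum `1`, resp. `j`,
gives a decomposition `R ⊔ S`, disjoint since `ℓ^j ≠ ℓ`; `S` meets `C_ℓ` because `(e, …, e, ℓ^j)`
lies in `C_ℓ` when `ℓ^j` is a twisted conjugate of `ℓ`. For `r = (e, …, e, ℓ)` and
`s = (e, …, e, ℓ^j)` the first coordinate of `r ▹ (s ▹ (r ▹ s))` is `ℓ^(j-1)` when `t ≥ 3`
and `ℓ^(2(j-1))` when `t = 2`, whereas that of `s` is `e`.
-/

section TwistedClass

variable {L : Type*} [Group L] (θ : L ≃* L) (t : ℕ)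

theorem thrU_mul (x y : Fin t → L) : thrU θ t (x * y) = thrU θ t x * thrU θ t y := by
  funext i
  simp only [thrU, Pi.mul_apply]
  split_ifs <;> simp

theorem thrU_inv (x : Fin t → L) : thrU θ t x⁻¹ = (thrU θ t x)⁻¹ := by
  funext i
  simp only [thrU, Pi.inv_apply]
  split_ifs <;> simp

theorem thrClassOf_subset_of_mem {x y : Fin t → L} (h : y ∈ thrClassOf θ t x) :
    thrClassOf θ t y ⊆ thrClassOf θ t x := by
  obtain ⟨g, rfl⟩ := h
  rintro _ ⟨g', rfl⟩
  exact ⟨g' * g, by rw [thrU_mul]; group⟩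

theorem thrU_mem_thrClassOf (x : Fin t → L) : thrU θ t x ∈ thrClassOf θ t x :=
  ⟨x⁻¹, by rw [thrU_inv]; group⟩

theorem thrOp_mem_thrClassOf {x z : Fin t → L} (y : Fin t → L) (hz : z ∈ thrClassOf θ t x) :
    thrOp θ t y z ∈ thrClassOf θ t x := by
  have hyz : thrOp θ t y z ∈ thrClassOf θ t (thrU θ t z) :=
    ⟨y, by rw [thrOp, thrU_mul, thrU_inv, mul_assoc]⟩
  exact thrClassOf_subset_of_mem θ t hz <|
    thrClassOf_subset_of_mem θ t (thrU_mem_thrClassOf θ t z) hyz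

theorem thrBase_mem_thrClass {ℓ k : L} (hk : k ∈ twConjClass θ ℓ) :
    thrBase t k ∈ thrClass θ t ℓ := by
  obtain ⟨w, rfl⟩ := hk
  refine ⟨fun i => if (i : ℕ) = t - 1 then w else θ w, ?_⟩
  funext i
  have hi := i.2
  simp only [thrBase, thrU, Pi.mul_apply, Pi.inv_apply]
  split_ifs <;> first | omega | group

end TwistedClass

theorem Fin.val_sub_one_eq_ite {t : ℕ} [NeZero t] (i : Fin t) :
    ((i - 1 : Fin t) : ℕ) = if (i : ℕ) = 0 then t - 1 else i - 1 := by
  obtain ⟨n, rfl⟩ := Nat.exists_eq_succ_of_ne_zero (NeZero.ne t)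
  rw [Fin.coe_sub_one]
  simp only [← Fin.val_eq_zero_iff, Nat.succ_sub_one]

section PowerVectors

variable {L : Type*} [Group L] (θ : L ≃* L) {t : ℕ} [NeZero t] {ℓ : L}

theorem thrU_of_forall_fixed {x : Fin t → L} (hx : ∀ i, θ (x i) = x i) :
    thrU θ t x = fun i => x (i - 1) := by
  funext i
  simp only [thrU]
  split_ifs with h
  · rw [hx]; congr 1; ext; simp [Fin.val_sub_one_eq_ite, h]
  · congr 1; ext; simp [Fin.val_sub_one_eq_ite, h]

theorem thrOp_zpow (hθℓ : θ ℓ = ℓ) (b c : Fin t → ℤ) :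
    thrOp θ t (fun i => ℓ ^ b i) (fun i => ℓ ^ c i)
      = fun i => ℓ ^ (b i + (c (i - 1) - b (i - 1))) := by
  have hdiff : (fun i => ℓ ^ c i) * (fun i => ℓ ^ b i)⁻¹ = fun i => ℓ ^ (c i - b i) := by
    funext i
    simp [zpow_sub]
  rw [thrOp, hdiff, thrU_of_forall_fixed θ fun i => by rw [map_zpow, hθℓ]]
  funext i
  simp only [Pi.mul_apply, ← zpow_add]

theorem sum_add_sub_comp_sub_one (b c : Fin t → ℤ) :
    ∑ i, (b i + (c (i - 1) - b (i - 1))) = ∑ i, c i := by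
  rw [Finset.sum_add_distrib, Finset.sum_sub_distrib,
    Fintype.sum_equiv (Equiv.subRight 1) (fun i => c (i - 1)) c (fun _ => rfl),
    Fintype.sum_equiv (Equiv.subRight 1) (fun i => b (i - 1)) b (fun _ => rfl)]
  ring

end PowerVectors

theorem zpow_sum_eq_of_zpow_eq {ι L : Type*} [Fintype ι] [Group L] {ℓ : L} {a b : ι → ℤ}
    (h : (fun i => ℓ ^ a i) = fun i => ℓ ^ b i) : ℓ ^ ∑ i, a i = ℓ ^ ∑ i, b i := by
  rw [zpow_eq_zpow_iff_modEq]
  exact Int.ModEq.sum fun i _ => zpow_eq_zpow_iff_modEq.mp (congrFun h i)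

section ExponentSum

variable {L : Type*} [Group L] (θ : L ≃* L) (t : ℕ)

def zpowVecWithSum (ℓ : L) (m : ℤ) : Set (Fin t → L) :=
  {x | ∃ a : Fin t → ℤ, x = (fun i => ℓ ^ a i) ∧ ℓ ^ ∑ i, a i = ℓ ^ m}

variable {ℓ : L}

theorem disjoint_zpowVecWithSum {m n : ℤ} (h : ℓ ^ m ≠ ℓ ^ n) :
    Disjoint (zpowVecWithSum t ℓ m) (zpowVecWithSum t ℓ n) := by
  rw [Set.disjoint_left]
  rintro _ ⟨a, rfl, ha⟩ ⟨b, hab, hb⟩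
  exact h (by rw [← ha, ← hb, zpow_sum_eq_of_zpow_eq hab])

theorem thrBase_zpow (m : ℤ) :
    thrBase t (ℓ ^ m) = fun i : Fin t => ℓ ^ (if (i : ℕ) = t - 1 then m else 0) := by
  funext i
  simp only [thrBase]
  split_ifs <;> simp

theorem thrBase_zpow_mem_zpowVecWithSum [NeZero t] (m : ℤ) :
    thrBase t (ℓ ^ m) ∈ zpowVecWithSum t ℓ m := by
  refine ⟨_, thrBase_zpow t m, ?_⟩
  rw [Fin.sum_univ_eq_sum_range (fun k => if k = t - 1 then m else 0), Finset.sum_ite_eq',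
      if_pos (Finset.mem_range.mpr (Nat.sub_one_lt (NeZero.ne t)))]

variable {t} [NeZero t]

theorem thrOp_mem_zpowVecWithSum (hθℓ : θ ℓ = ℓ) {y z : Fin t → L} {n m : ℤ}
    (hy : y ∈ zpowVecWithSum t ℓ n) (hz : z ∈ zpowVecWithSum t ℓ m) :
    thrOp θ t y z ∈ zpowVecWithSum t ℓ m := by
  obtain ⟨b, rfl, -⟩ := hy
  obtain ⟨c, rfl, hc⟩ := hz
  exact ⟨_, thrOp_zpow θ hθℓ b c, by rw [sum_add_sub_comp_sub_one, hc]⟩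

theorem thrOp_thrBase_apply_zero (hθℓ : θ ℓ = ℓ) (ht : 2 ≤ t) (m : ℤ) :
    thrOp θ t (thrBase t ℓ)
        (thrOp θ t (thrBase t (ℓ ^ m)) (thrOp θ t (thrBase t ℓ) (thrBase t (ℓ ^ m)))) 0
      = ℓ ^ ((if t = 2 then 2 else 1) * (m - 1)) := by
  rw [show thrBase t ℓ = thrBase t (ℓ ^ (1 : ℤ)) by rw [zpow_one], thrBase_zpow, thrBase_zpow]
  rw [thrOp_zpow θ hθℓ, thrOp_zpow θ hθℓ, thrOp_zpow θ hθℓ]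
  simp only [Fin.val_sub_one_eq_ite, Fin.val_zero, if_true]
  congr 1
  obtain rfl | h3 : t = 2 ∨ 3 ≤ t := by omega
  · norm_num; ring
  · obtain ⟨n, rfl⟩ := Nat.exists_eq_add_of_le' h3
    simp

theorem thrOp_thrBase_ne (hθℓ : θ ℓ = ℓ) (ht : 2 ≤ t) {m : ℤ}
    (hm : ¬ (orderOf ℓ : ℤ) ∣ (if t = 2 then 2 else 1) * (m - 1)) :
    thrOp θ t (thrBase t ℓ)
        (thrOp θ t (thrBase t (ℓ ^ m)) (thrOp θ t (thrBase t ℓ) (thrBase t (ℓ ^ m))))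
      ≠ thrBase t (ℓ ^ m) := by
  intro h
  apply hm
  rw [orderOf_dvd_iff_zpow_eq_one, ← thrOp_thrBase_apply_zero θ hθℓ ht, h, thrBase,
    if_neg (by simp; omega)]

end ExponentSum

theorem thrClass_isTypeD_of_quasiReal_general {L : Type*} [Group L]
    (θ : L ≃* L) (t : ℕ) (ht : 2 ≤ t) (ℓ : L) (hθℓ : θ ℓ = ℓ) (j : ℕ)
    (hqr1 : ℓ ^ j ≠ ℓ) (hqr2 : ℓ ^ j ∈ twConjClass θ ℓ)
    (h : 3 ≤ t ∨ (t = 2 ∧ ¬ ((orderOf ℓ : ℤ) ∣ 2 * ((j : ℤ) - 1)))) :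
    IsTypeDOn (thrOp θ t) (thrClass θ t ℓ) := by
  have : NeZero t := ⟨by omega⟩
  rw [← zpow_natCast] at hqr1 hqr2
  set C := thrClass θ t ℓ
  set V := zpowVecWithSum t ℓ
  have hr : thrBase t ℓ ∈ C ∩ V 1 :=
    ⟨thrBase_mem_thrClass θ t ⟨1, by simp⟩, by
      simpa using thrBase_zpow_mem_zpowVecWithSum t (ℓ := ℓ) 1⟩
  have hs : thrBase t (ℓ ^ (j : ℤ)) ∈ C ∩ V j :=
    ⟨thrBase_mem_thrClass θ t hqr2, thrBase_zpow_mem_zpowVecWithSum t j⟩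
  have hclosed : ∀ {n m : ℤ}, ∀ y ∈ C ∩ V n, ∀ z ∈ C ∩ V m, thrOp θ t y z ∈ C ∩ V m :=
    fun y hy _ hz => ⟨thrOp_mem_thrClassOf θ t y hz.1, thrOp_mem_zpowVecWithSum θ hθℓ hy.2 hz.2⟩
  have hdisj : Disjoint (C ∩ V 1) (C ∩ V j) :=
    (disjoint_zpowVecWithSum t (by rwa [zpow_one, ne_comm])).mono
      Set.inter_subset_right Set.inter_subset_right
  refine ⟨C ∩ V 1, C ∩ V j, Set.inter_subset_left, Set.inter_subset_left, ⟨⟨_, hr⟩, hclosed⟩,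
    ⟨⟨_, hs⟩, hclosed⟩, hdisj, hclosed, hclosed, _, hr, _, hs, thrOp_thrBase_ne θ hθℓ ht ?_⟩
  rcases h with h3 | ⟨rfl, h2⟩
  · rwa [if_neg (by omega), one_mul, orderOf_dvd_iff_zpow_eq_one, zpow_sub_one,
      mul_inv_eq_one]
  · simpa using h2

/-- Lemma 3.11: if `ℓ ∈ L^θ` is `θ`-quasi-real of type `j` (i.e. `ℓ^j ≠ ℓ` and
`ℓ^j ∈ O^{L,θ}_ℓ`), and `t ≥ 3`, or `t = 2` and `ord(ℓ) ∤ 2(j - 1)`, then `C_ℓ`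
is of type D. -/
theorem thrClass_isTypeD_of_quasiReal {L : Type*} [Group L] [Fintype L]
    (θ : L ≃* L) (t : ℕ) (ht : 2 ≤ t) (ℓ : L) (hθℓ : θ ℓ = ℓ) (j : ℕ)
    (hqr1 : ℓ ^ j ≠ ℓ) (hqr2 : ℓ ^ j ∈ twConjClass θ ℓ)
    (h : 3 ≤ t ∨ (t = 2 ∧ ¬ ((orderOf ℓ : ℤ) ∣ 2 * ((j : ℤ) - 1)))) :
    IsTypeDOn (thrOp θ t) (thrClass θ t ℓ) :=
  thrClass_isTypeD_of_quasiReal_general θ t ht ℓ hθℓ j hqr1 hqr2 h
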